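/- The bar involution d satisfies: for every y ∈ W, d(H_y) lies in H_y + Σ_{z < y} Z[v,v⁻¹] H_z, where < denotes the Bruhat order. That is, d(H_y) equals H_y plus a Z[v,v⁻¹]-linear combination of H_z with z strictly below y in Bruhat order. -/

import Mathlib

/-
Induct along a reduced word. If `ℓ(sw) > ℓ(w)` then `H_{sw} = H_s H_w` and
`d(H_s) = H_s + (v - v⁻¹)`, so with `r = d(H_w) - H_w` we get
`d(H_{sw}) - H_{sw} = H_s r + (v - v⁻¹)(H_w + r)`. As `H_s H_z ∈ span {H_z, H_{sz}}`, it remains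
to see that `z < w` implies `z < sw` and `sz < sw`; the latter is the lifting property of the
Bruhat order. Lifting is reduced to a single Bruhat step `u < ut`, where the strong exchange
property does the work. Strong exchange comes from the parity `n(w, t)` of the number of
occurrences of a reflection `t` in the left inversion sequence of a word for `w`, which is made
well defined by lifting the generators `s ↦ (δ_s, s)` to the semidirect product `(W → ℤ/2) ⋊ W`.
-/


open LaurentPolynomial

/-- Membership in `v ℤ[v] ⊆ ℤ[v,v⁻¹]`. -/
def IsVPol (p : LaurentPolynomial ℤ) : Prop :=
  ∃ q : Polynomial ℤ, p = Polynomial.toLaurent q * T 1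

/-- The coefficient of `v` in a Laurent polynomial. -/
def muCoeff (p : LaurentPolynomial ℤ) : ℤ := p.coeff 1

variable {B W : Type*} [Group W] {M : CoxeterMatrix B}

/-- The Bruhat order `≤` on `W`: generated by right multiplication by reflections which
increases the length. -/
def BruhatLE (cs : CoxeterSystem M W) : W → W → Prop :=
  Relation.ReflTransGen
    (fun a b => (∃ t, cs.IsReflection t ∧ b = a * t) ∧ cs.length a < cs.length b)

/-- The strict Bruhat order on `W`. -/
def BruhatLT (cs : CoxeterSystem M W) (x y : W) : Prop :=
  BruhatLE cs x y ∧ x ≠ y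

/-- The Hecke algebra of a Coxeter system, axiomatized: a `ℤ[v,v⁻¹]`-algebra with a basis
`T_x` indexed by `W` satisfying the braid and quadratic relations. -/
structure HeckeAlg (cs : CoxeterSystem M W) (A : Type*) [Ring A]
    [Algebra (LaurentPolynomial ℤ) A] where
  Tb : Module.Basis W (LaurentPolynomial ℤ) A
  Tb_one : Tb 1 = 1
  Tb_mul : ∀ x y : W, cs.length (x * y) = cs.length x + cs.length y →
    Tb x * Tb y = Tb (x * y)
  Tb_quadratic : ∀ i : B, (Tb (cs.simple i) + 1) *
    (Tb (cs.simple i) - algebraMap (LaurentPolynomial ℤ) A (T (-2))) = 0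

namespace HeckeAlg

variable {cs : CoxeterSystem M W} {A : Type*} [Ring A] [Algebra (LaurentPolynomial ℤ) A]

/-- The standard basis element `H_x = v^{ℓ(x)} T_x`. -/
noncomputable def H (ha : HeckeAlg cs A) (x : W) : A :=
  algebraMap (LaurentPolynomial ℤ) A (T (cs.length x : ℤ)) * ha.Tb x

/-- The element `C_s = H_s + v` for a simple reflection `s`. -/
noncomputable def Cs (ha : HeckeAlg cs A) (i : B) : A :=
  ha.H (cs.simple i) + algebraMap (LaurentPolynomial ℤ) A (T 1)

/-- Data of the bar involution `d` on the Hecke algebra: a ring endomorphism with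
`d(v) = v⁻¹` and `d(H_x) = (H_{x⁻¹})⁻¹`. -/
structure Bar (ha : HeckeAlg cs A) where
  d : A →+* A
  d_scalar : ∀ n : ℤ, d (algebraMap (LaurentPolynomial ℤ) A (T n)) =
    algebraMap (LaurentPolynomial ℤ) A (T (-n))
  d_H_mul : ∀ x : W, d (ha.H x) * ha.H x⁻¹ = 1
  d_H_mul' : ∀ x : W, ha.H x⁻¹ * d (ha.H x) = 1

/-- `c` is a Kazhdan–Lusztig basis element at `x`: bar-invariant and congruent to `H_x`
modulo `∑_y v ℤ[v] H_y`. -/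
def IsKL (ha : HeckeAlg cs A) (bar : ha.Bar) (x : W) (c : A) : Prop :=
  bar.d c = c ∧ ∃ f : W →₀ LaurentPolynomial ℤ, (∀ y, IsVPol (f y)) ∧
    c = ha.H x + f.sum fun y r => r • ha.H y

end HeckeAlg

open scoped Classical
open HeckeAlg

noncomputable section

section ConjArrow

variable (G N : Type*) [Group G] [Monoid N]

def conjArrow : G →* MulAut (G → N) :=
  mulAutArrow.comp ConjAct.toConjAct.toMonoidHom

variable {G N}

@[simp]
lemma conjArrow_apply (g : G) (f : G → N) (x : G) : conjArrow G N g f x = f (g⁻¹ * x * g) := by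
  change f ((ConjAct.toConjAct g)⁻¹ • x) = _
  rw [ConjAct.smul_def]
  simp

lemma conjArrow_mulSingle (g x : G) (n : N) :
    conjArrow G N g (Pi.mulSingle x n) = Pi.mulSingle (g * x * g⁻¹) n := by
  funext y
  rw [conjArrow_apply, Pi.mulSingle_apply, Pi.mulSingle_apply, mul_assoc, inv_mul_eq_iff_eq_mul,
    eq_mul_inv_iff_mul_eq]

end ConjArrow

abbrev ReflParityGroup (G : Type*) [Group G] :=
  (G → Multiplicative (ZMod 2)) ⋊[conjArrow G _] G

namespace CoxeterSystem

variable {B W : Type*} [Group W] {M : CoxeterMatrix B} (cs : CoxeterSystem M W)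

local prefix:100 "s" => cs.simple
local prefix:100 "π" => cs.wordProd

def reflParityGen (i : B) : ReflParityGroup W :=
  ⟨Pi.mulSingle (s i) (Multiplicative.ofAdd 1), s i⟩

lemma conj_pow_simple_mul_simple (i j : B) (k l : ℕ) :
    (s i * s j) ^ k * ((s i * s j) ^ l * s i) * ((s i * s j) ^ k)⁻¹ =
      (s i * s j) ^ (2 * k + l) * s i := by
  have hsemi : SemiconjBy (s i) (s i * s j)⁻¹ (s i * s j) := by
    rw [SemiconjBy, mul_inv_rev, inv_simple, inv_simple, mul_assoc]
  rw [← inv_pow, mul_assoc, mul_assoc, (hsemi.pow_right k).eq, ← mul_assoc, ← mul_assoc,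
    ← pow_add, ← pow_add, two_mul, add_right_comm]

lemma reflParityGen_mul_pow (i j : B) (k : ℕ) :
    (cs.reflParityGen i * cs.reflParityGen j) ^ k =
      ⟨∏ l ∈ Finset.range (2 * k), Pi.mulSingle ((s i * s j) ^ l * s i) (Multiplicative.ofAdd 1),
        (s i * s j) ^ k⟩ := by
  induction k with
  | zero => ext1 <;> simp
  | succ k ih =>
    rw [pow_succ, ih]
    ext1
    · have h0 := cs.conj_pow_simple_mul_simple i j k 0
      have h1 := cs.conj_pow_simple_mul_simple i j k 1
      simp only [pow_zero, one_mul, add_zero, pow_one, mul_assoc] at h0 h1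
      simp only [SemidirectProduct.mul_left, reflParityGen, map_mul, conjArrow_mulSingle,
        inv_simple, h0, h1, Finset.prod_range_succ, mul_assoc, show 2 * (k + 1) = 2 * k + 1 + 1 by ring]
    · exact (pow_succ _ _).symm

lemma isLiftable_reflParityGen : M.IsLiftable cs.reflParityGen := by
  intro i j
  rw [reflParityGen_mul_pow, simple_mul_simple_pow, two_mul, Finset.prod_range_add]
  -- `(s i * s j) ^ l * s i` is `M i j`-periodic in `l`, so every factor occurs twice
  ext1
  · simp only [pow_add, simple_mul_simple_pow, one_mul, SemidirectProduct.one_left]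
    funext t
    rw [Pi.mul_apply, Pi.one_apply]
    generalize (∏ l ∈ Finset.range (M i j), _ : W → Multiplicative (ZMod 2)) t = x
    exact CharTwo.add_self_eq_zero x.toAdd
  · rfl

def reflParityHom : W →* ReflParityGroup W :=
  cs.lift ⟨cs.reflParityGen, cs.isLiftable_reflParityGen⟩

lemma reflParityHom_simple (i : B) : cs.reflParityHom (s i) = cs.reflParityGen i :=
  cs.lift_apply_simple _ i

lemma right_reflParityHom (w : W) : (cs.reflParityHom w).right = w := by
  have h : SemidirectProduct.rightHom.comp cs.reflParityHom = MonoidHom.id W :=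
    cs.ext_simple fun i => by simp [reflParityHom_simple, reflParityGen]
  exact DFunLike.congr_fun h w

/-- The parity of the number of occurrences of `t` in the left inversion sequence of any word
for `w` (written `n(w, t)` by Björner–Brenti). -/
def reflParity (w t : W) : ZMod 2 :=
  ((cs.reflParityHom w).left t).toAdd

lemma reflParity_mul (u v t : W) :
    cs.reflParity (u * v) t = cs.reflParity u t + cs.reflParity v (u⁻¹ * t * u) := by
  simp [reflParity, right_reflParityHom]

lemma reflParity_simple (i : B) (t : W) :
    cs.reflParity (s i) t = if t = s i then 1 else 0 := by
  simp [reflParity, reflParityHom_simple, reflParityGen, Pi.mulSingle_apply, apply_ite]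

lemma reflParity_one (t : W) : cs.reflParity 1 t = 0 := by
  simp [reflParity]

lemma reflParity_wordProd (ω : List B) (t : W) :
    cs.reflParity (π ω) t = (cs.leftInvSeq ω).count t := by
  induction ω generalizing t with
  | nil => simp [reflParity_one]
  | cons i ω ih =>
    have hconj : MulAut.conj (s i) (s i * t * s i) = t := by
      simp [mul_assoc]
    rw [wordProd_cons, reflParity_mul, reflParity_simple, inv_simple, ih, leftInvSeq,
      List.count_cons, ← hconj, List.count_map_of_injective _ _ (MulAut.conj (s i)).injective,
      hconj]
    push_cast
    split_ifs <;> simp_all [add_comm]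

lemma reflParity_self {t : W} (ht : cs.IsReflection t) : cs.reflParity t t = 1 := by
  obtain ⟨u, i, rfl⟩ := ht
  have hinv : cs.reflParity u⁻¹ (s i) = cs.reflParity u (u * s i * u⁻¹) := by
    have h := cs.reflParity_mul u u⁻¹ (u * s i * u⁻¹)
    rw [mul_inv_cancel, reflParity_one, show u⁻¹ * (u * s i * u⁻¹) * u = s i by group] at h
    exact (CharTwo.add_eq_zero.mp h.symm).symm
  nth_rw 1 [mul_assoc]
  rw [reflParity_mul, reflParity_mul, reflParity_simple, inv_simple, if_pos (by group),
    show s i * (u⁻¹ * (u * s i * u⁻¹) * u) * s i = s i by simp [mul_assoc], hinv,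
    add_left_comm, CharTwo.add_self_eq_zero, add_zero]

lemma mem_leftInvSeq_of_reflParity_eq_one {ω : List B} {t : W}
    (h : cs.reflParity (π ω) t = 1) : t ∈ cs.leftInvSeq ω := by
  by_contra hmem
  rw [reflParity_wordProd, List.count_eq_zero_of_not_mem hmem] at h
  simp at h

lemma isLeftInversion_of_reflParity_eq_one {w t : W} (h : cs.reflParity w t = 1) :
    cs.IsLeftInversion w t := by
  obtain ⟨ω, hω, rfl⟩ := cs.exists_isReduced w
  exact cs.isLeftInversion_of_mem_leftInvSeq hω (cs.mem_leftInvSeq_of_reflParity_eq_one h)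

lemma reflParity_eq_one_of_isLeftInversion {w t : W} (h : cs.IsLeftInversion w t) :
    cs.reflParity w t = 1 := by
  obtain h0 | h1 := (by decide : ∀ x : ZMod 2, x = 0 ∨ x = 1) (cs.reflParity w t)
  swap
  · exact h1
  have h1 : cs.reflParity (t * w) t = 1 := by
    rw [reflParity_mul, reflParity_self cs h.1, h.1.inv, h.1.mul_self, one_mul, h0, add_zero]
  have h2 := (cs.isLeftInversion_of_reflParity_eq_one h1).2
  rw [← mul_assoc, h.1.mul_self, one_mul] at h2
  exact absurd h2 (lt_asymm h.2)

lemma mem_rightInvSeq_of_isRightInversion {ω : List B} {t : W}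
    (h : cs.IsRightInversion (π ω) t) : t ∈ cs.rightInvSeq ω := by
  rw [← isLeftInversion_inv_iff, ← wordProd_reverse] at h
  have hmem := cs.mem_leftInvSeq_of_reflParity_eq_one (cs.reflParity_eq_one_of_isLeftInversion h)
  rwa [leftInvSeq_reverse, List.mem_reverse] at hmem

/-- The strong exchange property. -/
theorem exists_eraseIdx_of_isRightInversion {ω : List B} {t : W}
    (h : cs.IsRightInversion (π ω) t) : ∃ j < ω.length, π ω * t = π (ω.eraseIdx j) := by
  obtain ⟨j, hj, rfl⟩ := List.mem_iff_getElem.mp (cs.mem_rightInvSeq_of_isRightInversion h)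
  rw [length_rightInvSeq] at hj
  refine ⟨j, hj, ?_⟩
  rw [← List.getD_eq_getElem _ 1, wordProd_mul_getD_rightInvSeq]

end CoxeterSystem

section Bruhat

variable {B W : Type*} [Group W] {M : CoxeterMatrix B} {cs : CoxeterSystem M W}

local prefix:100 "s" => cs.simple
local prefix:100 "π" => cs.wordProd
local prefix:100 "ℓ" => cs.length

lemma BruhatLE.trans {x y z : W} (hxy : BruhatLE cs x y) (hyz : BruhatLE cs y z) :
    BruhatLE cs x z :=
  Relation.ReflTransGen.trans hxy hyz

lemma BruhatLE.length_le {x y : W} (h : BruhatLE cs x y) : ℓ x ≤ ℓ y := by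
  induction h with
  | refl => rfl
  | tail _ hstep ih => exact ih.trans hstep.2.le

lemma BruhatLT.length_lt {x y : W} (h : BruhatLT cs x y) : ℓ x < ℓ y := by
  rcases Relation.ReflTransGen.cases_tail h.1 with heq | ⟨z, hxz, hstep⟩
  · exact absurd heq.symm h.2
  · exact (BruhatLE.length_le hxz).trans_lt hstep.2

lemma BruhatLT.trans {x y z : W} (hxy : BruhatLT cs x y) (hyz : BruhatLT cs y z) :
    BruhatLT cs x z :=
  ⟨hxy.1.trans hyz.1, fun hxz => by
    subst hxz
    exact lt_asymm hxy.length_lt hyz.length_lt⟩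

lemma bruhatLT_simple_mul {w : W} {i : B} (h : ℓ w < ℓ (s i * w)) : BruhatLT cs w (s i * w) := by
  refine ⟨Relation.ReflTransGen.single ⟨⟨w⁻¹ * s i * w, ?_, by group⟩, h⟩, fun he => ?_⟩
  · simpa using (cs.isReflection_simple i).conj w⁻¹
  · rw [← he] at h
    exact lt_irrefl _ h

/-- If `ℓ (s i * u * t) ≤ ℓ (s i * u)`, the strong exchange property forces `s i * u = u * t`. -/
lemma simple_mul_eq_or_bruhatLE_of_step {u t : W} (ht : cs.IsReflection t)
    (hut : ℓ u < ℓ (u * t)) (i : B) :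
    s i * u = u * t ∨ BruhatLE cs (s i * u) (s i * (u * t)) := by
  rcases lt_or_ge (ℓ (s i * u)) (ℓ (s i * (u * t))) with hlt | hge
  · exact Or.inr (Relation.ReflTransGen.single ⟨⟨t, ht, (mul_assoc _ _ _).symm⟩, hlt⟩)
  left
  have hdesc : ℓ (s i * (u * t)) + 1 = ℓ (u * t) := by
    rcases cs.length_simple_mul u i with h | h <;>
      rcases cs.length_simple_mul (u * t) i with h' | h' <;> omega
  obtain ⟨ρ, hρ, hρw⟩ := cs.exists_isReduced (s i * (u * t))
  have hw : π (i :: ρ) = u * t := by rw [cs.wordProd_cons, ← hρw, cs.simple_mul_simple_cancel_left]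
  have hwt : u * t * t = u := by rw [mul_assoc, ht.mul_self, mul_one]
  obtain ⟨j, hj, hexch⟩ := cs.exists_eraseIdx_of_isRightInversion
    (⟨ht, by rwa [hw, hwt]⟩ : cs.IsRightInversion (π (i :: ρ)) t)
  rw [hw, hwt] at hexch
  cases j with
  | zero =>
    rw [List.eraseIdx_cons_zero, ← hρw] at hexch
    conv_lhs => rw [hexch]
    exact cs.simple_mul_simple_cancel_left _
  | succ k =>
    exfalso
    rw [List.eraseIdx_cons_succ, cs.wordProd_cons] at hexch
    have hsu : s i * u = π (ρ.eraseIdx k) := by rw [hexch, cs.simple_mul_simple_cancel_left]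
    have hk : (ρ.eraseIdx k).length + 1 = ρ.length :=
      List.length_eraseIdx_add_one (by simpa using hj)
    have hle := cs.length_wordProd_le (ρ.eraseIdx k)
    rw [hsu, hρw, hρ.eq] at hge
    rw [hρw, hρ.eq] at hdesc
    omega

lemma BruhatLE.simple_mul_or {z w : W} (h : BruhatLE cs z w) (i : B) :
    BruhatLE cs (s i * z) w ∨ BruhatLE cs (s i * z) (s i * w) := by
  induction h using Relation.ReflTransGen.head_induction_on with
  | refl => exact Or.inr Relation.ReflTransGen.refl
  | head hstep hrest ih =>
    obtain ⟨⟨t, ht, rfl⟩, hlt⟩ := hstep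
    rcases simple_mul_eq_or_bruhatLE_of_step ht hlt i with heq | hle
    · exact Or.inl (heq ▸ hrest)
    · exact ih.imp hle.trans hle.trans

/-- The lifting property of the Bruhat order. -/
lemma BruhatLE.simple_mul {z w : W} (h : BruhatLE cs z w) {i : B} (hw : ℓ w < ℓ (s i * w)) :
    BruhatLE cs (s i * z) (s i * w) :=
  (h.simple_mul_or i).elim (fun h' => h'.trans (bruhatLT_simple_mul hw).1) id

lemma BruhatLT.simple_mul {z w : W} (h : BruhatLT cs z w) {i : B} (hw : ℓ w < ℓ (s i * w)) :
    BruhatLT cs (s i * z) (s i * w) :=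
  ⟨h.1.simple_mul hw, fun he => h.2 (mul_left_cancel he)⟩

end Bruhat

namespace HeckeAlg

variable {B W : Type*} [Group W] {M : CoxeterMatrix B} {cs : CoxeterSystem M W}
  {A : Type*} [Ring A] [Algebra (LaurentPolynomial ℤ) A] (ha : HeckeAlg cs A)

local prefix:100 "s" => cs.simple
local prefix:100 "ℓ" => cs.length
local notation "R" => LaurentPolynomial ℤ

lemma H_eq_smul (x : W) : ha.H x = (T (ℓ x : ℤ) : R) • ha.Tb x :=
  (Algebra.smul_def _ _).symm

lemma H_one : ha.H 1 = 1 := by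
  simp [H_eq_smul, ha.Tb_one]

lemma H_mul_of_length_mul_eq {x y : W} (h : ℓ (x * y) = ℓ x + ℓ y) :
    ha.H (x * y) = ha.H x * ha.H y := by
  rw [H_eq_smul, H_eq_smul, H_eq_smul, smul_mul_smul_comm, ha.Tb_mul x y h, ← T_add, h]
  push_cast
  rfl

lemma Tb_simple_mul_self (i : B) :
    ha.Tb (s i) * ha.Tb (s i) =
      (T (-2) : R) • ha.Tb (s i) - ha.Tb (s i) + (T (-2) : R) • (1 : A) := by
  have hq := ha.Tb_quadratic i
  rw [Algebra.algebraMap_eq_smul_one, add_mul, mul_sub, mul_sub, one_mul, mul_smul_comm,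
    mul_one, one_mul] at hq
  rw [← sub_eq_zero, ← hq]
  abel

lemma H_simple_mul_self (i : B) :
    ha.H (s i) * ha.H (s i) = algebraMap R A (T (-1) - T 1) * ha.H (s i) + 1 := by
  rw [← Algebra.smul_def, H_eq_smul, smul_mul_smul_comm, Tb_simple_mul_self, cs.length_simple]
  match_scalars <;> simp only [mul_one, mul_sub, sub_mul, ← T_add] <;> norm_num

lemma H_simple_mul_H_simple_add (i : B) :
    ha.H (s i) * (ha.H (s i) + algebraMap R A (T 1 - T (-1))) = 1 := by
  rw [mul_add, H_simple_mul_self, ← Algebra.commutes, ← add_rotate, ← add_mul, ← map_add]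
  simp

variable {ha} in
lemma Bar.d_H_simple (bar : ha.Bar) (i : B) :
    bar.d (ha.H (s i)) = ha.H (s i) + algebraMap R A (T 1 - T (-1)) := by
  have hinv : bar.d (ha.H (s i)) * ha.H (s i) = 1 := by
    simpa [cs.inv_simple] using bar.d_H_mul (s i)
  calc bar.d (ha.H (s i))
      = bar.d (ha.H (s i)) * (ha.H (s i) * (ha.H (s i) + algebraMap R A (T 1 - T (-1)))) := by
        rw [H_simple_mul_H_simple_add, mul_one]
    _ = ha.H (s i) + algebraMap R A (T 1 - T (-1)) := by rw [← mul_assoc, hinv, one_mul]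

lemma H_simple_mul_mem_span (i : B) (z : W) :
    ha.H (s i) * ha.H z ∈ Submodule.span R {ha.H z, ha.H (s i * z)} := by
  rcases cs.length_simple_mul z i with hup | hdown
  · rw [← ha.H_mul_of_length_mul_eq (by rw [hup, cs.length_simple, add_comm])]
    exact Submodule.subset_span (by simp)
  · have hz : ha.H z = ha.H (s i) * ha.H (s i * z) := by
      rw [← ha.H_mul_of_length_mul_eq (by rw [cs.simple_mul_simple_cancel_left, ← hdown,
        cs.length_simple, add_comm]), cs.simple_mul_simple_cancel_left]
    rw [hz, ← mul_assoc, H_simple_mul_self, add_mul, one_mul, mul_assoc, ← hz, ← Algebra.smul_def]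
    exact Submodule.add_mem _ (Submodule.smul_mem _ _ (Submodule.subset_span (by simp)))
      (Submodule.subset_span (by simp))

def spanBelow (y : W) : Submodule R A :=
  Submodule.span R (ha.H '' {z | BruhatLT cs z y})

lemma H_mem_spanBelow {z y : W} (h : BruhatLT cs z y) : ha.H z ∈ ha.spanBelow y :=
  Submodule.subset_span ⟨z, h, rfl⟩

lemma spanBelow_mono {y y' : W} (h : BruhatLT cs y' y) : ha.spanBelow y' ≤ ha.spanBelow y :=
  Submodule.span_le.mpr fun _ ⟨_, hz, hx⟩ => hx ▸ ha.H_mem_spanBelow (BruhatLT.trans hz h)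

lemma H_simple_mul_mem_spanBelow {w : W} {i : B} (hw : ℓ w < ℓ (s i * w)) {x : A}
    (hx : x ∈ ha.spanBelow w) : ha.H (s i) * x ∈ ha.spanBelow (s i * w) := by
  have hle : ha.spanBelow w ≤
      (ha.spanBelow (s i * w)).comap (LinearMap.mulLeft R (ha.H (s i))) := by
    refine Submodule.span_le.mpr ?_
    rintro _ ⟨z, hz, rfl⟩
    have hpair : ({ha.H z, ha.H (s i * z)} : Set A) ⊆ ha.spanBelow (s i * w) := by
      rintro _ (rfl | rfl)
      · exact ha.H_mem_spanBelow (BruhatLT.trans hz (bruhatLT_simple_mul hw))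
      · exact ha.H_mem_spanBelow (BruhatLT.simple_mul hz hw)
    exact Submodule.span_le.mpr hpair (ha.H_simple_mul_mem_span i z)
  exact hle hx

variable {ha} in
lemma Bar.d_H_sub_H_simple_mul_mem_spanBelow (bar : ha.Bar) {w : W} {i : B}
    (hw : ℓ w < ℓ (s i * w)) (h : bar.d (ha.H w) - ha.H w ∈ ha.spanBelow w) :
    bar.d (ha.H (s i * w)) - ha.H (s i * w) ∈ ha.spanBelow (s i * w) := by
  set r := bar.d (ha.H w) - ha.H w
  have hH : ha.H (s i * w) = ha.H (s i) * ha.H w :=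
    ha.H_mul_of_length_mul_eq (by rcases cs.length_simple_mul w i with h | h <;>
      simp only [cs.length_simple] <;> omega)
  have hdiff : bar.d (ha.H (s i * w)) - ha.H (s i * w) =
      ha.H (s i) * r + (T 1 - T (-1) : R) • ha.H w + (T 1 - T (-1) : R) • r := by
    rw [hH, map_mul, Bar.d_H_simple, show bar.d (ha.H w) = ha.H w + r by simp [r],
      Algebra.smul_def, Algebra.smul_def]
    noncomm_ring
  have hbelow := bruhatLT_simple_mul hw
  rw [hdiff]
  exact add_mem (add_mem (ha.H_simple_mul_mem_spanBelow hw h)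
    (Submodule.smul_mem _ _ (ha.H_mem_spanBelow hbelow)))
    (Submodule.smul_mem _ _ (ha.spanBelow_mono hbelow h))

end HeckeAlg

end

/-- `d(H_y) ∈ H_y + ∑_{z < y} ℤ[v,v⁻¹] H_z`. -/
theorem stmt3 {B W : Type*} [Group W] {M : CoxeterMatrix B} (cs : CoxeterSystem M W)
    (A : Type*) [Ring A] [Algebra (LaurentPolynomial ℤ) A] (ha : HeckeAlg cs A)
    (bar : ha.Bar) (y : W) :
    bar.d (ha.H y) - ha.H y ∈
      Submodule.span (LaurentPolynomial ℤ) (ha.H '' {z | BruhatLT cs z y}) := by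
  obtain ⟨ω, hω, rfl⟩ := cs.exists_isReduced y
  induction ω with
  | nil => simp [H_one]
  | cons i ω ih =>
    have hω' : cs.IsReduced ω := by simpa using hω.drop 1
    have hlen : cs.length (cs.wordProd ω) < cs.length (cs.simple i * cs.wordProd ω) := by
      rw [← cs.wordProd_cons, hω.eq, hω'.eq]
      simp
    rw [cs.wordProd_cons]
    exact bar.d_H_sub_H_simple_mul_mem_spanBelow hlen (ih hω')
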